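/- Lévy-type maximal inequality: let X_1,…,X_n be independent random variables in a sub-linear expectation space, S_k = Σ_{i=1}^k X_i, and 0 < α < 1. If there exist constants β_{n,k} such that V(|S_k − S_n| ≥ β_{n,k} + ε) ≤ α for all ε > 0 and all k = 1,…,n, then for all x > 0 and ε > 0: (1 − α) V(max_{k≤n} (|S_k| − β_{n,k}) > x + ε) ≤ V(|S_n| > x). -/

import Mathlib

open Filter MeasureTheory Set
open scoped ENNReal

noncomputable section

/-- A sub-linear expectation space: `H` is a linear space of real functions on `Ω`
(closed under composition with locally Lipschitz functions and containing constants),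
and `E` is monotone, constant preserving, sub-additive and positively homogeneous on `H`. -/
structure SLE (Ω : Type*) where
  H : Set (Ω → ℝ)
  E : (Ω → ℝ) → ℝ
  const_mem : ∀ c : ℝ, (fun _ => c) ∈ H
  comp_mem : ∀ (n : ℕ) (Xs : Fin n → Ω → ℝ), (∀ i, Xs i ∈ H) →
      ∀ f : (Fin n → ℝ) → ℝ, LocallyLipschitz f →
      (fun ω => f (fun i => Xs i ω)) ∈ H
  mono : ∀ X ∈ H, ∀ Y ∈ H, (∀ ω, X ω ≤ Y ω) → E X ≤ E Y
  const : ∀ c : ℝ, E (fun _ => c) = c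
  subadd : ∀ X ∈ H, ∀ Y ∈ H, E (fun ω => X ω + Y ω) ≤ E X + E Y
  poshomog : ∀ X ∈ H, ∀ l : ℝ, 0 ≤ l → E (fun ω => l * X ω) = l * E X

namespace SLE

variable {Ω : Type*}

/-- The truncation `X^(c) = (-c) ∨ X ∧ c`. -/
def trunc (X : Ω → ℝ) (c : ℝ) : Ω → ℝ := fun ω => max (-c) (min (X ω) c)

/-- The upper capacity `V(A) = inf{E[ξ] : I_A ≤ ξ, ξ ∈ H}`. -/
def V (S : SLE Ω) (A : Set Ω) : ℝ :=
  sInf {r | ∃ ξ ∈ S.H, (∀ ω, 0 ≤ ξ ω) ∧ (∀ ω ∈ A, (1 : ℝ) ≤ ξ ω) ∧ S.E ξ = r}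

/-- `H₁ = {X ∈ H : lim_{c,d→∞} E[(|X| ∧ d - c)⁺] = 0}`. -/
def H1 (S : SLE Ω) : Set (Ω → ℝ) :=
  {X | X ∈ S.H ∧
    Tendsto (fun cd : ℝ × ℝ => S.E (fun ω => max (min |X ω| cd.2 - cd.1) 0))
      (atTop ×ˢ atTop) (nhds 0)}

/-- `Ê[X] = lim_{c→∞} E[(-c) ∨ X ∧ c]` (the limit along `c → ∞`, when it exists). -/
def EHat (S : SLE Ω) (X : Ω → ℝ) : ℝ :=
  limUnder atTop (fun c : ℝ => S.E (trunc X c))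

/-- Countably sub-additive extension of the upper capacity. -/
def Vstar (S : SLE Ω) (A : Set Ω) : ℝ≥0∞ :=
  ⨅ (B : ℕ → Set Ω) (_ : A ⊆ ⋃ n, B n), ∑' n, ENNReal.ofReal (S.V (B n))

/-- Bounded Lipschitz test functions on `ℝ`. -/
def BLip (φ : ℝ → ℝ) : Prop :=
  (∃ K, LipschitzWith K φ) ∧ ∃ M, ∀ x, |φ x| ≤ M

/-- Peng's independence for a sequence of random variables: `X (n)` is independent
of `(X 0, …, X (n-1))` for every `n`, tested on bounded Lipschitz functions. -/
def Indep (S : SLE Ω) (X : ℕ → Ω → ℝ) : Prop :=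
  ∀ n : ℕ, ∀ φ : (Fin n → ℝ) → ℝ → ℝ,
    (∃ K, LipschitzWith K (fun p : (Fin n → ℝ) × ℝ => φ p.1 p.2)) →
    (∃ M, ∀ a b, |φ a b| ≤ M) →
    S.E (fun ω => φ (fun i => X i ω) (X n ω)) =
      S.E (fun ω => S.E (fun ω' => φ (fun i => X i ω) (X n ω')))

/-- Identical distribution of a sequence. -/
def IdentDist (S : SLE Ω) (X : ℕ → Ω → ℝ) : Prop :=
  ∀ n, ∀ φ : ℝ → ℝ, BLip φ → S.E (fun ω => φ (X n ω)) = S.E (fun ω => φ (X 0 ω))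

/-- Regularity of a sub-linear expectation: `E[Yₙ] ↓ 0` whenever bounded `Yₙ ↓ 0`. -/
def Regular (S : SLE Ω) : Prop :=
  ∀ Y : ℕ → Ω → ℝ, (∀ n, Y n ∈ S.H) → (∃ M, ∀ n ω, |Y n ω| ≤ M) →
    (∀ ω, Antitone fun n => Y n ω) → (∀ ω, Tendsto (fun n => Y n ω) atTop (nhds 0)) →
    Tendsto (fun n => S.E (Y n)) atTop (nhds 0)

end SLE

/-!
Let `W_k` be the indicator that `k` is the first index with `|S_k| - β_k > x + ε`, and let
`T_k = S_n - S_k`. The events `{W_k = 1}` are disjoint and cover the event on the left, and on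
`{W_k = 1, |T_k| < β_k + ε/2}` we have `|S_n| > x`. Split
`(1 - α) W_k = W_k 1{|T_k| small} + W_k (1{|T_k| large} - α)`: by sub-additivity the first parts
contribute at most `V(|S_n| > x)`, and since `T_k` is independent of `W_k`, a function of
`X_0, …, X_{k-1}`, each `E[W_k (1{|T_k| large} - α)] = E[W_k E[1{|T_k| large} - α]] ≤ 0`.
All indicators are replaced by Lipschitz ramps, so that everything lies in `H` and independence
applies.
-/

def BoundedLipschitz {A : Type*} [PseudoMetricSpace A] (f : A → ℝ) : Prop :=
  (∃ K, LipschitzWith K f) ∧ ∃ M, ∀ a, |f a| ≤ M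

namespace BoundedLipschitz

variable {A B : Type*} [PseudoMetricSpace A] [PseudoMetricSpace B] {f g : A → ℝ}

lemma const (c : ℝ) : BoundedLipschitz (fun _ : A => c) :=
  ⟨⟨0, LipschitzWith.const c⟩, |c|, fun _ => le_rfl⟩

lemma comp {h : B → ℝ} (hh : BoundedLipschitz h) {K : NNReal} {g : A → B}
    (hg : LipschitzWith K g) : BoundedLipschitz (fun a => h (g a)) :=
  let ⟨⟨L, hL⟩, M, hM⟩ := hh
  ⟨⟨L * K, hL.comp hg⟩, M, fun a => hM (g a)⟩

lemma sub (hf : BoundedLipschitz f) (hg : BoundedLipschitz g) :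
    BoundedLipschitz (fun a => f a - g a) :=
  let ⟨⟨_, hKf⟩, Mf, hMf⟩ := hf
  let ⟨⟨_, hKg⟩, Mg, hMg⟩ := hg
  ⟨⟨_, hKf.sub hKg⟩, Mf + Mg, fun a => (abs_sub _ _).trans (add_le_add (hMf a) (hMg a))⟩

lemma mul (hf : BoundedLipschitz f) (hg : BoundedLipschitz g) :
    BoundedLipschitz (fun a => f a * g a) := by
  obtain ⟨⟨Kf, hKf⟩, Mf, hMf⟩ := hf
  obtain ⟨⟨Kg, hKg⟩, Mg, hMg⟩ := hg
  have hf_le a : |f a| ≤ |Mf| := (hMf a).trans (le_abs_self _)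
  have hg_le a : |g a| ≤ |Mg| := (hMg a).trans (le_abs_self _)
  refine ⟨⟨_, LipschitzWith.of_dist_le' (K := |Mf| * Kg + Kf * |Mg|) fun a b => ?_⟩,
    |Mf| * |Mg|, fun a => abs_mul (f a) (g a) ▸
      mul_le_mul (hf_le a) (hg_le a) (abs_nonneg _) (abs_nonneg _)⟩
  have hdf := hKf.dist_le_mul a b
  have hdg := hKg.dist_le_mul a b
  rw [Real.dist_eq] at hdf hdg ⊢
  calc |f a * g a - f b * g b| = |f a * (g a - g b) + (f a - f b) * g b| := by ring_nf
    _ ≤ |f a| * |g a - g b| + |f a - f b| * |g b| := by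
      rw [← abs_mul, ← abs_mul]; exact abs_add_le _ _
    _ ≤ |Mf| * (Kg * dist a b) + Kf * dist a b * |Mg| :=
      add_le_add (mul_le_mul (hf_le a) hdg (abs_nonneg _) (abs_nonneg _))
        (mul_le_mul hdf (hg_le b) (abs_nonneg _) (by positivity))
    _ = (|Mf| * Kg + Kf * |Mg|) * dist a b := by ring

lemma finset_prod {ι : Type*} (s : Finset ι) {g : ι → A → ℝ}
    (hg : ∀ i ∈ s, BoundedLipschitz (g i)) : BoundedLipschitz (fun a => ∏ i ∈ s, g i a) := by
  simpa only [Finset.prod_fn] using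
    Finset.prod_induction g BoundedLipschitz (fun _ _ => mul) (const 1) hg

end BoundedLipschitz

lemma lipschitzWith_sum_apply {ι : Type*} [Fintype ι] (s : Finset ι) :
    LipschitzWith s.card (fun a : ι → ℝ => ∑ i ∈ s, a i) := by
  refine LipschitzWith.of_dist_le_mul fun a b => ?_
  rw [Real.dist_eq, ← Finset.sum_sub_distrib, NNReal.coe_natCast]
  calc |∑ i ∈ s, (a i - b i)| ≤ ∑ i ∈ s, |a i - b i| := Finset.abs_sum_le_sum_abs _ _
    _ ≤ ∑ _ ∈ s, dist a b := Finset.sum_le_sum fun i _ => dist_le_pi_dist a b i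
    _ = s.card * dist a b := by rw [Finset.sum_const, nsmul_eq_mul]

lemma lipschitzWith_comp_castLE {k m : ℕ} (h : k ≤ m) :
    LipschitzWith 1 (fun a : Fin m → ℝ => fun i : Fin k => a (Fin.castLE h i)) :=
  LipschitzWith.of_edist_le fun a b => edist_pi_le_iff.2 fun _ => edist_le_pi_edist a b _

lemma sum_fin_filter_eq_sum_range_filter {m : ℕ} (p : ℕ → Prop) [DecidablePred p] (f : ℕ → ℝ) :
    ∑ i : Fin m with p i.val, f i = ∑ i ∈ (Finset.range m).filter p, f i := by
  rw [Finset.sum_filter, Finset.sum_filter]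
  exact Fin.sum_univ_eq_sum_range (fun i => if p i then f i else 0) m

lemma lipschitzWith_abs : LipschitzWith 1 (fun t : ℝ => |t|) := lipschitzWith_one_norm

def ramp (a b t : ℝ) : ℝ := max 0 (min 1 ((t - a) / (b - a)))

section Ramp

variable {a b : ℝ}

lemma ramp_nonneg (t : ℝ) : 0 ≤ ramp a b t := le_max_left _ _

lemma ramp_le_one (t : ℝ) : ramp a b t ≤ 1 := max_le zero_le_one (min_le_left _ _)

lemma ramp_of_le (hab : a ≤ b) {t : ℝ} (ht : t ≤ a) : ramp a b t = 0 :=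
  max_eq_left <| (min_le_right _ _).trans <|
    div_nonpos_of_nonpos_of_nonneg (by linarith) (by linarith)

lemma ramp_of_ge (hab : a < b) {t : ℝ} (ht : b ≤ t) : ramp a b t = 1 := by
  have : 1 ≤ (t - a) / (b - a) := by rw [le_div_iff₀ (by linarith)]; linarith
  simp [ramp, min_eq_left this]

lemma boundedLipschitz_ramp (a b : ℝ) : BoundedLipschitz (ramp a b) := by
  refine ⟨⟨_, ((LipschitzWith.of_dist_le' (K := |b - a|⁻¹) fun s t => ?_).const_min 1).const_max 0⟩,
    1, fun t => abs_le.2 ⟨by linarith [ramp_nonneg (a := a) (b := b) t], ramp_le_one t⟩⟩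
  rw [Real.dist_eq, Real.dist_eq, ← sub_div, sub_sub_sub_cancel_right, abs_div, div_eq_inv_mul]

end Ramp

/-- For `{0,1}`-valued `g`, this is the indicator that `k ≥ 1` is the first index with `g k = 1`. -/
def passageWeight (g : ℕ → ℝ) (k : ℕ) : ℝ := g k * ∏ j ∈ Finset.Ico 1 k, (1 - g j)

section PassageWeight

variable {g g' : ℕ → ℝ}

lemma passageWeight_congr {k : ℕ} (h : ∀ j ≤ k, g j = g' j) :
    passageWeight g k = passageWeight g' k := by
  unfold passageWeight
  rw [h k le_rfl, Finset.prod_congr rfl fun j hj => by rw [h j (Finset.mem_Ico.1 hj).2.le]]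

lemma passageWeight_nonneg (h0 : ∀ j, 0 ≤ g j) (h1 : ∀ j, g j ≤ 1) (k : ℕ) :
    0 ≤ passageWeight g k :=
  mul_nonneg (h0 k) (Finset.prod_nonneg fun j _ => sub_nonneg.2 (h1 j))

lemma sum_passageWeight (g : ℕ → ℝ) (n : ℕ) :
    ∑ k ∈ Finset.Icc 1 n, passageWeight g k = 1 - ∏ j ∈ Finset.Icc 1 n, (1 - g j) := by
  induction n with
  | zero => simp
  | succ n ih =>
    rw [Finset.sum_Icc_succ_top (by omega), Finset.prod_Icc_succ_top (by omega), ih, passageWeight,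
      Finset.Ico_add_one_right_eq_Icc]
    ring

lemma sum_passageWeight_le_one (h1 : ∀ j, g j ≤ 1) (n : ℕ) :
    ∑ k ∈ Finset.Icc 1 n, passageWeight g k ≤ 1 := by
  rw [sum_passageWeight]
  linarith [Finset.prod_nonneg fun j (_ : j ∈ Finset.Icc 1 n) => sub_nonneg.2 (h1 j)]

lemma sum_passageWeight_eq_one {n k : ℕ} (hk : k ∈ Finset.Icc 1 n) (hgk : g k = 1) :
    ∑ k ∈ Finset.Icc 1 n, passageWeight g k = 1 := by
  rw [sum_passageWeight, Finset.prod_eq_zero hk (by rw [hgk, sub_self]), sub_zero]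

end PassageWeight

lemma BoundedLipschitz.passageWeight {A : Type*} [PseudoMetricSpace A] {g : ℕ → A → ℝ}
    (hg : ∀ j, BoundedLipschitz (g j)) (k : ℕ) :
    BoundedLipschitz (fun a => _root_.passageWeight (fun j => g j a) k) :=
  (hg k).mul (.finset_prod _ fun j _ => (const 1).sub (hg j))

namespace SLE

variable {Ω : Type*} (S : SLE Ω) {u v Y : Ω → ℝ}

lemma comp_mem_of_locallyLipschitz {φ : ℝ → ℝ} (hφ : LocallyLipschitz φ) (hY : Y ∈ S.H) :
    (fun ω => φ (Y ω)) ∈ S.H :=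
  S.comp_mem 1 (fun _ => Y) (fun _ => hY) (fun v => φ (v 0))
    (hφ.comp (LipschitzWith.eval 0).locallyLipschitz)

lemma comp_const_add_mem {h : ℝ → ℝ} (hh : BoundedLipschitz h) (hY : Y ∈ S.H) (t : ℝ) :
    (fun ω => h (t + Y ω)) ∈ S.H :=
  let ⟨⟨_, hK⟩, _⟩ := hh
  S.comp_mem_of_locallyLipschitz (φ := fun x => h (t + x))
    (hK.comp ((LipschitzWith.const t).add LipschitzWith.id)).locallyLipschitz hY

lemma comp₂_mem {φ : ℝ → ℝ → ℝ} (hφ : ContDiff ℝ 1 (fun p : ℝ × ℝ => φ p.1 p.2))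
    (hu : u ∈ S.H) (hv : v ∈ S.H) : (fun ω => φ (u ω) (v ω)) ∈ S.H :=
  S.comp_mem 2 ![u, v] (Fin.forall_fin_two.2 ⟨hu, hv⟩) (fun w => φ (w 0) (w 1))
    (hφ.comp (by fun_prop : ContDiff ℝ 1 (fun w : Fin 2 → ℝ => (w 0, w 1)))).locallyLipschitz

lemma add_mem (hu : u ∈ S.H) (hv : v ∈ S.H) : (fun ω => u ω + v ω) ∈ S.H :=
  S.comp₂_mem (φ := (· + ·)) (by fun_prop) hu hv

lemma sub_mem (hu : u ∈ S.H) (hv : v ∈ S.H) : (fun ω => u ω - v ω) ∈ S.H :=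
  S.comp₂_mem (φ := (· - ·)) (by fun_prop) hu hv

lemma mul_mem (hu : u ∈ S.H) (hv : v ∈ S.H) : (fun ω => u ω * v ω) ∈ S.H :=
  S.comp₂_mem (φ := (· * ·)) (by fun_prop) hu hv

lemma sum_mem {ι : Type*} (s : Finset ι) {g : ι → Ω → ℝ} (hg : ∀ i ∈ s, g i ∈ S.H) :
    (fun ω => ∑ i ∈ s, g i ω) ∈ S.H := by
  simpa only [Finset.sum_fn] using
    Finset.sum_induction g (· ∈ S.H) (fun _ _ => S.add_mem) (S.const_mem 0) hg

lemma E_le_of_le_const (hu : u ∈ S.H) {c : ℝ} (h : ∀ ω, u ω ≤ c) : S.E u ≤ c :=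
  S.const c ▸ S.mono u hu _ (S.const_mem c) h

lemma le_E_of_const_le (hu : u ∈ S.H) {c : ℝ} (h : ∀ ω, c ≤ u ω) : c ≤ S.E u :=
  S.const c ▸ S.mono _ (S.const_mem c) u hu h

lemma E_le_E_add_of_le (hu : u ∈ S.H) (hv : v ∈ S.H) {c : ℝ} (h : ∀ ω, u ω ≤ v ω + c) :
    S.E u ≤ S.E v + c :=
  calc S.E u ≤ S.E (fun ω => v ω + c) := S.mono u hu _ (S.add_mem hv (S.const_mem c)) h
    _ ≤ S.E v + c := (S.subadd v hv _ (S.const_mem c)).trans_eq (by rw [S.const])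

lemma E_sum_le {ι : Type*} (s : Finset ι) {g : ι → Ω → ℝ} (hg : ∀ i ∈ s, g i ∈ S.H) :
    S.E (fun ω => ∑ i ∈ s, g i ω) ≤ ∑ i ∈ s, S.E (g i) := by
  simpa only [Finset.sum_fn] using
    Finset.le_sum_of_subadditive_on_pred S.E (· ∈ S.H) (S.const 0).le
      (fun x y hx hy => S.subadd x hx y hy) (fun _ _ => S.add_mem) g hg

lemma one_sub_mul_E_sum_le {ι : Type*} (s : Finset ι) {f r : ι → Ω → ℝ} (hf : ∀ i ∈ s, f i ∈ S.H)
    (hr : ∀ i ∈ s, r i ∈ S.H) {α : ℝ} (hα : α ≤ 1) :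
    (1 - α) * S.E (fun ω => ∑ i ∈ s, f i ω) ≤
      S.E (fun ω => ∑ i ∈ s, f i ω * (1 - r i ω)) +
        ∑ i ∈ s, S.E (fun ω => f i ω * (r i ω - α)) := by
  have hsmall := S.sum_mem s fun i hi => S.mul_mem (hf i hi) (S.sub_mem (S.const_mem 1) (hr i hi))
  have hlarge i (hi : i ∈ s) := S.mul_mem (hf i hi) (S.sub_mem (hr i hi) (S.const_mem α))
  calc (1 - α) * S.E (fun ω => ∑ i ∈ s, f i ω)
      = S.E (fun ω => (1 - α) * ∑ i ∈ s, f i ω) :=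
        (S.poshomog _ (S.sum_mem s hf) _ (by linarith)).symm
    _ = S.E (fun ω => ∑ i ∈ s, f i ω * (1 - r i ω) + ∑ i ∈ s, f i ω * (r i ω - α)) := by
        congr 1
        funext ω
        rw [Finset.mul_sum, ← Finset.sum_add_distrib]
        exact Finset.sum_congr rfl fun i _ => by ring
    _ ≤ S.E (fun ω => ∑ i ∈ s, f i ω * (1 - r i ω)) +
          S.E (fun ω => ∑ i ∈ s, f i ω * (r i ω - α)) :=
        S.subadd _ hsmall _ (S.sum_mem s hlarge)
    _ ≤ _ := add_le_add_right (S.E_sum_le s hlarge) _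

lemma V_le_E {A : Set Ω} (hu : u ∈ S.H) (h0 : ∀ ω, 0 ≤ u ω) (h1 : ∀ ω ∈ A, 1 ≤ u ω) :
    S.V A ≤ S.E u :=
  csInf_le ⟨0, by rintro _ ⟨ζ, hζ, hζ0, -, rfl⟩; exact S.le_E_of_const_le hζ hζ0⟩
    ⟨u, hu, h0, h1, rfl⟩

lemma E_le_V {A : Set Ω} (hu : u ∈ S.H) (h1 : ∀ ω, u ω ≤ 1) (h0 : ∀ ω ∉ A, u ω ≤ 0) :
    S.E u ≤ S.V A := by
  refine le_csInf ⟨1, fun _ => 1, S.const_mem 1, fun _ => zero_le_one, fun _ _ => le_rfl,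
    S.const 1⟩ ?_
  rintro _ ⟨ξ, hξ, hξ0, hξ1, rfl⟩
  refine S.mono u hu ξ hξ fun ω => ?_
  by_cases hω : ω ∈ A
  exacts [(h1 ω).trans (hξ1 ω hω), (h0 ω hω).trans (hξ0 ω)]

lemma boundedLipschitz_E_comp_add {h : ℝ → ℝ} (hh : BoundedLipschitz h) (hY : Y ∈ S.H) :
    BoundedLipschitz (fun t => S.E (fun ω => h (t + Y ω))) := by
  have mem := S.comp_const_add_mem hh hY
  obtain ⟨⟨K, hK⟩, M, hM⟩ := hh
  refine ⟨⟨K, LipschitzWith.of_le_add_mul K fun s t => S.E_le_E_add_of_le (mem s) (mem t)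
    fun ω => ?_⟩, M, fun t => abs_le.2 ⟨S.le_E_of_const_le (mem t) fun ω => (abs_le.1 (hM _)).1,
      S.E_le_of_le_const (mem t) fun ω => (abs_le.1 (hM _)).2⟩⟩
  have := hK.dist_le_mul (s + Y ω) (t + Y ω)
  rw [dist_add_right] at this
  linarith [le_abs_self (h (s + Y ω) - h (t + Y ω)), Real.dist_eq (h (s + Y ω)) (h (t + Y ω))]

variable {S} {X : ℕ → Ω → ℝ}

lemma Indep.E_mul_comp_sum_Ico_succ (hX : S.Indep X) (hH : ∀ i, X i ∈ S.H) {k m : ℕ}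
    (hkm : k ≤ m) {F : (Fin k → ℝ) → ℝ} (hF : BoundedLipschitz F) (hF0 : ∀ a, 0 ≤ F a)
    {h : ℝ → ℝ} (hh : BoundedLipschitz h) :
    S.E (fun ω => F (fun i => X i ω) * h (∑ i ∈ Finset.Ico k (m + 1), X i ω)) =
      S.E (fun ω => F (fun i => X i ω) *
        S.E (fun ω' => h (∑ i ∈ Finset.Ico k m, X i ω + X m ω'))) := by
  set φ : (Fin m → ℝ) → ℝ → ℝ := fun a b =>
    F (fun i => a (Fin.castLE hkm i)) * h (∑ i : Fin m with k ≤ i.val, a i + b)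
  have hφ : BoundedLipschitz (fun p : (Fin m → ℝ) × ℝ => φ p.1 p.2) :=
    (hF.comp ((lipschitzWith_comp_castLE hkm).comp LipschitzWith.prod_fst)).mul
      (hh.comp (((lipschitzWith_sum_apply _).comp LipschitzWith.prod_fst).add
        LipschitzWith.prod_snd))
  obtain ⟨M, hM⟩ := hφ.2
  have hsum (ω : Ω) : ∑ i : Fin m with k ≤ i.val, X i ω = ∑ i ∈ Finset.Ico k m, X i ω := by
    rw [sum_fin_filter_eq_sum_range_filter (k ≤ ·) (X · ω)]
    congr 1
    ext i
    simp [and_comm]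
  calc S.E (fun ω => F (fun i => X i ω) * h (∑ i ∈ Finset.Ico k (m + 1), X i ω))
      = S.E (fun ω => φ (fun i => X i ω) (X m ω)) := by
        simp only [φ, hsum, Finset.sum_Ico_succ_top hkm, Fin.val_castLE]
    _ = S.E (fun ω => S.E (fun ω' => φ (fun i => X i ω) (X m ω'))) :=
        hX m φ hφ.1 ⟨M, fun a b => hM (a, b)⟩
    _ = _ := by
        congr 1
        funext ω
        simp only [φ, hsum]
        exact S.poshomog _ (S.comp_const_add_mem hh (hH m) _) _ (hF0 _)

theorem Indep.E_mul_comp_sum_Ico (hX : S.Indep X) (hH : ∀ i, X i ∈ S.H) {k m : ℕ}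
    (hkm : k ≤ m) {F : (Fin k → ℝ) → ℝ} (hF : BoundedLipschitz F) (hF0 : ∀ a, 0 ≤ F a)
    {h : ℝ → ℝ} (hh : BoundedLipschitz h) :
    S.E (fun ω => F (fun i => X i ω) * h (∑ i ∈ Finset.Ico k m, X i ω)) =
      S.E (fun ω => F (fun i => X i ω) * S.E (fun ω' => h (∑ i ∈ Finset.Ico k m, X i ω'))) := by
  induction m, hkm using Nat.le_induction generalizing h with
  | base => simp [S.const]
  | succ m hkm ih =>
    have hE : S.E (fun ω => h (∑ i ∈ Finset.Ico k (m + 1), X i ω)) =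
        S.E (fun ω => S.E (fun ω' => h (∑ i ∈ Finset.Ico k m, X i ω + X m ω'))) := by
      simpa only [one_mul] using
        hX.E_mul_comp_sum_Ico_succ hH hkm (.const 1) (fun _ => zero_le_one) hh
    rw [hX.E_mul_comp_sum_Ico_succ hH hkm hF hF0 hh, hE]
    exact ih (S.boundedLipschitz_E_comp_add hh (hH m))

end SLE

def crossingWeight (β : ℕ → ℝ) (x ε : ℝ) (s : ℕ → ℝ) (k : ℕ) : ℝ :=
  passageWeight (fun j => ramp (x + ε / 2) (x + ε) (|s j| - β j)) k

section CrossingWeight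

variable (β : ℕ → ℝ) (x ε : ℝ)

lemma crossingWeight_nonneg (s : ℕ → ℝ) (k : ℕ) : 0 ≤ crossingWeight β x ε s k :=
  passageWeight_nonneg (fun _ => ramp_nonneg _) (fun _ => ramp_le_one _) k

lemma sum_crossingWeight_le_one (s : ℕ → ℝ) (n : ℕ) :
    ∑ k ∈ Finset.Icc 1 n, crossingWeight β x ε s k ≤ 1 :=
  sum_passageWeight_le_one (fun _ => ramp_le_one _) n

lemma sum_crossingWeight_eq_one (hε : 0 < ε) {s : ℕ → ℝ} {n k : ℕ} (hk : k ∈ Finset.Icc 1 n)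
    (h : x + ε < |s k| - β k) : ∑ k ∈ Finset.Icc 1 n, crossingWeight β x ε s k = 1 :=
  sum_passageWeight_eq_one hk (ramp_of_ge (by linarith) h.le)

lemma crossingWeight_eq_zero (hε : 0 < ε) {s : ℕ → ℝ} {k : ℕ} (h : |s k| - β k ≤ x + ε / 2) :
    crossingWeight β x ε s k = 0 := by
  rw [crossingWeight, passageWeight, ramp_of_le (by linarith) h, zero_mul]

lemma boundedLipschitz_crossingWeight (k : ℕ) :
    BoundedLipschitz (fun a : Fin k → ℝ =>
      crossingWeight β x ε (fun j => ∑ i : Fin k with i.val < j, a i) k) :=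
  .passageWeight (fun j => (boundedLipschitz_ramp _ _).comp
    ((lipschitzWith_abs.comp (lipschitzWith_sum_apply _)).sub (.const (β j)))) k

lemma crossingWeight_sum_fin (y : ℕ → ℝ) (k : ℕ) :
    crossingWeight β x ε (fun j => ∑ i : Fin k with i.val < j, y i) k =
      crossingWeight β x ε (fun j => ∑ i ∈ Finset.range j, y i) k := by
  refine passageWeight_congr fun j hj => ?_
  dsimp only
  have hfilter : (Finset.range k).filter (· < j) = Finset.range j := by
    ext i
    simp only [Finset.mem_filter, Finset.mem_range]
    omega
  rw [sum_fin_filter_eq_sum_range_filter (· < j) y, hfilter]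

end CrossingWeight

namespace SLE

variable {Ω : Type*} (S : SLE Ω) {X : ℕ → Ω → ℝ} (β : ℕ → ℝ) (x ε : ℝ)

lemma ramp_abs_mem {Y : Ω → ℝ} (hY : Y ∈ S.H) (a b : ℝ) : (fun ω => ramp a b |Y ω|) ∈ S.H :=
  let ⟨⟨_, hK⟩, _⟩ := boundedLipschitz_ramp a b
  S.comp_mem_of_locallyLipschitz (φ := fun t => ramp a b |t|)
    (hK.comp lipschitzWith_abs).locallyLipschitz hY

lemma crossingWeight_mem (hH : ∀ i, X i ∈ S.H) (k : ℕ) :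
    (fun ω => crossingWeight β x ε (fun j => ∑ i ∈ Finset.range j, X i ω) k) ∈ S.H := by
  obtain ⟨⟨_, hK⟩, _⟩ := boundedLipschitz_crossingWeight β x ε k
  convert S.comp_mem k _ (fun i => hH i) _ hK.locallyLipschitz using 1
  funext ω
  exact (crossingWeight_sum_fin β x ε (X · ω) k).symm

lemma V_le_E_sum_crossingWeight (hH : ∀ i, X i ∈ S.H) (hε : 0 < ε) (n : ℕ) :
    S.V {ω | ∃ k, 1 ≤ k ∧ k ≤ n ∧ x + ε < |∑ i ∈ Finset.range k, X i ω| - β k} ≤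
      S.E (fun ω => ∑ k ∈ Finset.Icc 1 n,
        crossingWeight β x ε (fun j => ∑ i ∈ Finset.range j, X i ω) k) :=
  S.V_le_E (S.sum_mem _ fun k _ => S.crossingWeight_mem β x ε hH k)
    (fun _ => Finset.sum_nonneg fun k _ => crossingWeight_nonneg β x ε _ k)
    fun _ ⟨_, hk1, hkn, hk⟩ =>
      (sum_crossingWeight_eq_one β x ε hε (Finset.mem_Icc.2 ⟨hk1, hkn⟩) hk).ge

lemma E_sum_crossingWeight_mul_le_V (hH : ∀ i, X i ∈ S.H) (hε : 0 < ε) (n : ℕ) :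
    S.E (fun ω => ∑ k ∈ Finset.Icc 1 n,
        crossingWeight β x ε (fun j => ∑ i ∈ Finset.range j, X i ω) k *
          (1 - ramp (β k + ε / 4) (β k + ε / 2) |∑ i ∈ Finset.Ico k n, X i ω|)) ≤
      S.V {ω | x < |∑ i ∈ Finset.range n, X i ω|} := by
  refine S.E_le_V (S.sum_mem _ fun k _ => S.mul_mem (S.crossingWeight_mem β x ε hH k)
    (S.sub_mem (S.const_mem 1) (S.ramp_abs_mem (S.sum_mem _ fun i _ => hH i) _ _))) ?_ ?_
  · exact fun ω => (Finset.sum_le_sum fun k _ => mul_le_of_le_one_right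
      (crossingWeight_nonneg β x ε _ k) (sub_le_self _ (ramp_nonneg _))).trans
        (sum_crossingWeight_le_one β x ε _ n)
  intro ω hω
  have hSn : |∑ i ∈ Finset.range n, X i ω| ≤ x := not_lt.1 hω
  refine (Finset.sum_eq_zero fun k hk => ?_).le
  rcases le_or_gt (|∑ i ∈ Finset.range k, X i ω| - β k) (x + ε / 2) with h | h
  · rw [crossingWeight_eq_zero β x ε hε h, zero_mul]
  have hsplit := Finset.sum_range_add_sum_Ico (X · ω) (Finset.mem_Icc.1 hk).2
  have hle := abs_sub (∑ i ∈ Finset.range n, X i ω) (∑ i ∈ Finset.Ico k n, X i ω)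
  rw [← hsplit, add_sub_cancel_right, hsplit] at hle
  rw [ramp_of_ge (by linarith) (by linarith), sub_self, mul_zero]

lemma E_crossingWeight_mul_ramp_sub_nonpos (hX : S.Indep X) (hH : ∀ i, X i ∈ S.H) (hε : 0 < ε)
    {k n : ℕ} (hkn : k ≤ n) {α : ℝ}
    (hα : S.V {ω | β k + ε / 4 ≤
      |∑ i ∈ Finset.range k, X i ω - ∑ i ∈ Finset.range n, X i ω|} ≤ α) :
    S.E (fun ω => crossingWeight β x ε (fun j => ∑ i ∈ Finset.range j, X i ω) k *
        (ramp (β k + ε / 4) (β k + ε / 2) |∑ i ∈ Finset.Ico k n, X i ω| - α)) ≤ 0 := by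
  have hT := S.ramp_abs_mem (S.sum_mem (Finset.Ico k n) fun i _ => hH i)
    (β k + ε / 4) (β k + ε / 2)
  have hfac := hX.E_mul_comp_sum_Ico hH hkn (boundedLipschitz_crossingWeight β x ε k)
    (fun _ => crossingWeight_nonneg β x ε _ k)
    (((boundedLipschitz_ramp (β k + ε / 4) (β k + ε / 2)).comp lipschitzWith_abs).sub
      (.const α))
  have hW (ω : Ω) : crossingWeight β x ε (fun j => ∑ i : Fin k with i.val < j, X i ω) k =
      crossingWeight β x ε (fun j => ∑ i ∈ Finset.range j, X i ω) k :=
    crossingWeight_sum_fin β x ε (X · ω) k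
  simp only [hW] at hfac
  have hsmall : S.E (fun ω => ramp (β k + ε / 4) (β k + ε / 2) |∑ i ∈ Finset.Ico k n, X i ω|)
      ≤ α := by
    refine (S.E_le_V hT (fun _ => ramp_le_one _) fun ω hω => ?_).trans hα
    rw [Finset.sum_Ico_eq_sub _ hkn, abs_sub_comm]
    exact (ramp_of_le (by linarith) (not_le.1 hω).le).le
  have hc : S.E (fun ω => ramp (β k + ε / 4) (β k + ε / 2) |∑ i ∈ Finset.Ico k n, X i ω| - α)
      ≤ 0 := by
    have := S.E_le_E_add_of_le (S.sub_mem hT (S.const_mem α)) hT fun _ => (sub_eq_add_neg _ α).le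
    linarith
  rw [hfac]
  exact S.E_le_of_le_const (S.mul_mem (S.crossingWeight_mem β x ε hH k) (S.const_mem _))
    fun ω => mul_nonpos_of_nonneg_of_nonpos (crossingWeight_nonneg β x ε _ k) hc

end SLE

theorem levy_maximal_inequality_general {Ω : Type*} (S : SLE Ω) (n : ℕ)
    (X : ℕ → Ω → ℝ) (hindep : S.Indep X) (hH : ∀ i, X i ∈ S.H)
    (α : ℝ) (hα1 : α < 1) (β : ℕ → ℝ)
    (hyp : ∀ ε > (0 : ℝ), ∀ k, 1 ≤ k → k ≤ n →
      S.V {ω | β k + ε ≤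
        |∑ i ∈ Finset.range k, X i ω - ∑ i ∈ Finset.range n, X i ω|} ≤ α) :
    ∀ x > (0 : ℝ), ∀ ε > (0 : ℝ),
      (1 - α) * S.V {ω | ∃ k, 1 ≤ k ∧ k ≤ n ∧
          x + ε < |∑ i ∈ Finset.range k, X i ω| - β k} ≤
        S.V {ω | x < |∑ i ∈ Finset.range n, X i ω|} := by
  intro x _ ε hε
  set W : ℕ → Ω → ℝ := fun k ω => crossingWeight β x ε (fun j => ∑ i ∈ Finset.range j, X i ω) k
  set r : ℕ → Ω → ℝ := fun k ω => ramp (β k + ε / 4) (β k + ε / 2) |∑ i ∈ Finset.Ico k n, X i ω|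
  calc _ ≤ (1 - α) * S.E (fun ω => ∑ k ∈ Finset.Icc 1 n, W k ω) :=
        mul_le_mul_of_nonneg_left (S.V_le_E_sum_crossingWeight β x ε hH hε n) (by linarith)
    _ ≤ S.E (fun ω => ∑ k ∈ Finset.Icc 1 n, W k ω * (1 - r k ω)) +
          ∑ k ∈ Finset.Icc 1 n, S.E (fun ω => W k ω * (r k ω - α)) :=
        S.one_sub_mul_E_sum_le _ (fun k _ => S.crossingWeight_mem β x ε hH k)
          (fun k _ => S.ramp_abs_mem (S.sum_mem _ fun i _ => hH i) _ _) hα1.le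
    _ ≤ S.V {ω | x < |∑ i ∈ Finset.range n, X i ω|} + 0 := by
        refine add_le_add (S.E_sum_crossingWeight_mul_le_V β x ε hH hε n)
          (Finset.sum_nonpos fun k hk => ?_)
        obtain ⟨hk1, hkn⟩ := Finset.mem_Icc.1 hk
        exact S.E_crossingWeight_mul_ramp_sub_nonpos β x ε hindep hH hε hkn
          (hyp (ε / 4) (by positivity) k hk1 hkn)
    _ = _ := add_zero _

/-- Lévy-type maximal inequality under sub-linear expectation. -/
theorem levy_maximal_inequality {Ω : Type*} (S : SLE Ω) (n : ℕ)
    (X : ℕ → Ω → ℝ) (hindep : S.Indep X) (hH : ∀ i, X i ∈ S.H)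
    (α : ℝ) (hα0 : 0 < α) (hα1 : α < 1) (β : ℕ → ℝ)
    (hyp : ∀ ε > (0 : ℝ), ∀ k, 1 ≤ k → k ≤ n →
      S.V {ω | β k + ε ≤
        |∑ i ∈ Finset.range k, X i ω - ∑ i ∈ Finset.range n, X i ω|} ≤ α) :
    ∀ x > (0 : ℝ), ∀ ε > (0 : ℝ),
      (1 - α) * S.V {ω | ∃ k, 1 ≤ k ∧ k ≤ n ∧
          x + ε < |∑ i ∈ Finset.range k, X i ω| - β k} ≤
        S.V {ω | x < |∑ i ∈ Finset.range n, X i ω|} :=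
  levy_maximal_inequality_general S n X hindep hH α hα1 β hyp
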